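/- arXiv:math/0204025 — 3 statements merged into one kernel-verified Lean document; each statement's English description precedes it below -/
import Mathlib

section
/- In the Ariki-Koike algebra, the elements L_1, …, L_n pairwise commute. -/
noncomputable section

/-- The defining relations of the Ariki-Koike algebra `H_{q,Q}(W_{r,n})`, as
relations on the free `R`-algebra on generators `T_0, …, T_{n-1}`. -/
inductive AKRel (R : Type) [CommRing R] (n r : ℕ) (q : R) (Q : Fin r → R) :
    FreeAlgebra R (Fin n) → FreeAlgebra R (Fin n) → Prop
  | order (h : 0 < n) :
      AKRel R n r q Q
        (((List.finRange r).map fun s =>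
            FreeAlgebra.ι R (⟨0, h⟩ : Fin n) -
              algebraMap R (FreeAlgebra R (Fin n)) (Q s)).prod) 0
  | quad (i : Fin n) (hi : 1 ≤ (i : ℕ)) :
      AKRel R n r q Q
        ((FreeAlgebra.ι R i - algebraMap R (FreeAlgebra R (Fin n)) q) *
          (FreeAlgebra.ι R i + 1)) 0
  | braid01 (h0 : 0 < n) (h1 : 1 < n) :
      AKRel R n r q Q
        (FreeAlgebra.ι R (⟨0, h0⟩ : Fin n) * FreeAlgebra.ι R ⟨1, h1⟩ *
          FreeAlgebra.ι R ⟨0, h0⟩ * FreeAlgebra.ι R ⟨1, h1⟩)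
        (FreeAlgebra.ι R (⟨1, h1⟩ : Fin n) * FreeAlgebra.ι R ⟨0, h0⟩ *
          FreeAlgebra.ι R ⟨1, h1⟩ * FreeAlgebra.ι R ⟨0, h0⟩)
  | comm (i j : Fin n) (hij : (i : ℕ) + 1 < (j : ℕ)) :
      AKRel R n r q Q (FreeAlgebra.ι R i * FreeAlgebra.ι R j)
        (FreeAlgebra.ι R j * FreeAlgebra.ι R i)
  | braid (i j : Fin n) (hi : 1 ≤ (i : ℕ)) (hj : (j : ℕ) = (i : ℕ) + 1) :
      AKRel R n r q Q
        (FreeAlgebra.ι R i * FreeAlgebra.ι R j * FreeAlgebra.ι R i)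
        (FreeAlgebra.ι R j * FreeAlgebra.ι R i * FreeAlgebra.ι R j)

/-- The Ariki-Koike algebra: the quotient of the free algebra on `T_0, …, T_{n-1}`
by the defining relations. -/
abbrev ArikiKoike (R : Type) [CommRing R] (n r : ℕ) (q : R) (Q : Fin r → R) :=
  RingQuot (AKRel R n r q Q)

/-- The generator `T_i` of the Ariki-Koike algebra. -/
def Tgen (R : Type) [CommRing R] (n r : ℕ) (q : R) (Q : Fin r → R) (i : Fin n) :
    ArikiKoike R n r q Q :=
  RingQuot.mkAlgHom R (AKRel R n r q Q) (FreeAlgebra.ι R i)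

/-- `T_i` for a natural number index (junk value `0` for `i ≥ n`). -/
def TgenN (R : Type) [CommRing R] (n r : ℕ) (q : R) (Q : Fin r → R) (i : ℕ) :
    ArikiKoike R n r q Q :=
  if h : i < n then Tgen R n r q Q ⟨i, h⟩ else 0

/-- The elements `L_{k+1} = q^{-k} T_k ⋯ T_1 T_0 T_1 ⋯ T_k` (0-based index `k`). -/
def Lelt (R : Type) [CommRing R] (n r : ℕ) (q : Rˣ) (Q : Fin r → R) :
    ℕ → ArikiKoike R n r (q : R) Q
  | 0 => TgenN R n r (q : R) Q 0
  | (j + 1) =>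
      ((q⁻¹ : Rˣ) : R) •
        (TgenN R n r (q : R) Q (j + 1) * Lelt R n r q Q j * TgenN R n r (q : R) Q (j + 1))

end

section Aux

/-- The core braid computation, in an arbitrary ring. -/
private theorem akCore {S : Type*} [Ring S] (A B X : S)
    (hXA : X * A = A * X)
    (hbr : B * A * B = A * B * A)
    (hIH : B * X * B * X = X * B * X * B) :
    A * (B * (X * (B * (A * (B * (X * B)))))) =
      B * (X * (B * (A * (B * (X * (B * A)))))) := by
  have hba : ∀ y : S, B * (A * (B * y)) = A * (B * (A * y)) := by
    intro y; simp only [← mul_assoc]; rw [hbr]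
  have hab : ∀ y : S, A * (B * (A * y)) = B * (A * (B * y)) := fun y => (hba y).symm
  have hxa : ∀ y : S, X * (A * y) = A * (X * y) := by
    intro y; simp only [← mul_assoc]; rw [hXA]
  have hax : ∀ y : S, A * (X * y) = X * (A * y) := fun y => (hxa y).symm
  have hih : ∀ y : S, B * (X * (B * (X * y))) = X * (B * (X * (B * y))) := by
    intro y; simp only [← mul_assoc]; rw [hIH]
  have hba0 : B * (A * B) = A * (B * A) := by
    rw [← mul_assoc, hbr, mul_assoc]
  have hL : A * (B * (X * (B * (A * (B * (X * B)))))) =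
      B * (A * (X * (B * (X * (A * (B * A)))))) := by
    rw [hba (X*B), hxa (B*(A*(X*B))), hax B, hab (X*(B*(X*(A*B)))), hih (A*B), hba0]
  have hR : B * (X * (B * (A * (B * (X * (B * A)))))) =
      B * (A * (X * (B * (X * (A * (B * A)))))) := by
    rw [hba (X*(B*A)), hxa (B*(A*(X*(B*A)))), hax (B*A)]
  rw [hL, hR]

variable {R : Type} [CommRing R] {n r : ℕ} {q : Rˣ} {Q : Fin r → R}

private lemma Tgen_comm (i j : Fin n) (h : (i : ℕ) + 1 < (j : ℕ)) :
    Tgen R n r (q : R) Q i * Tgen R n r (q : R) Q j =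
      Tgen R n r (q : R) Q j * Tgen R n r (q : R) Q i := by
  have := RingQuot.mkAlgHom_rel R
    (AKRel.comm (R := R) (n := n) (r := r) (q := (q : R)) (Q := Q) i j h)
  simpa only [Tgen, map_mul] using this

private lemma Tgen_braid (i j : Fin n) (hi : 1 ≤ (i : ℕ)) (hj : (j : ℕ) = (i : ℕ) + 1) :
    Tgen R n r (q : R) Q i * Tgen R n r (q : R) Q j * Tgen R n r (q : R) Q i =
      Tgen R n r (q : R) Q j * Tgen R n r (q : R) Q i * Tgen R n r (q : R) Q j := by
  have := RingQuot.mkAlgHom_rel R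
    (AKRel.braid (R := R) (n := n) (r := r) (q := (q : R)) (Q := Q) i j hi hj)
  simpa only [Tgen, map_mul] using this

private lemma TgenN_comm (i j : ℕ) (h : i + 1 < j) :
    Commute (TgenN R n r (q : R) Q i) (TgenN R n r (q : R) Q j) := by
  unfold TgenN
  split_ifs with h1 h2 h2
  · exact Tgen_comm ⟨i, h1⟩ ⟨j, h2⟩ h
  · exact Commute.zero_right _
  · exact Commute.zero_left _
  · exact Commute.zero_left _

private lemma TgenN_braid (j : ℕ) (hj : 1 ≤ j) :
    TgenN R n r (q : R) Q j * TgenN R n r (q : R) Q (j + 1) * TgenN R n r (q : R) Q j =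
      TgenN R n r (q : R) Q (j + 1) * TgenN R n r (q : R) Q j *
        TgenN R n r (q : R) Q (j + 1) := by
  unfold TgenN
  split_ifs with h1 h2 h2
  · exact Tgen_braid ⟨j, h1⟩ ⟨j + 1, h2⟩ hj rfl
  · simp
  · omega
  · simp

private lemma Lelt_eq_zero (j : ℕ) (h : n ≤ j) : Lelt R n r q Q j = 0 := by
  cases j with
  | zero => simp [Lelt, TgenN, Nat.lt_of_lt_of_le, show ¬ (0 < n) by omega]
  | succ j =>
      have : TgenN R n r (q : R) Q (j + 1) = 0 := by
        simp [TgenN, show ¬ (j + 1 < n) by omega]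
      simp [Lelt, this]

private lemma TgenN_comm_Lelt (m i : ℕ) (h : m + 2 ≤ i) :
    Commute (TgenN R n r (q : R) Q i) (Lelt R n r q Q m) := by
  induction m with
  | zero => exact (TgenN_comm 0 i (by omega)).symm
  | succ m ih =>
      show Commute _ (((q⁻¹ : Rˣ) : R) • _)
      refine Commute.smul_right ?_ _
      exact ((TgenN_comm (m + 1) i (by omega)).symm.mul_right (ih (by omega))).mul_right
        (TgenN_comm (m + 1) i (by omega)).symm

private lemma Lelt_adj (j : ℕ) :
    Commute (Lelt R n r q Q j) (Lelt R n r q Q (j + 1)) := by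
  induction j with
  | zero =>
      show Commute (TgenN R n r (q : R) Q 0) (((q⁻¹ : Rˣ) : R) • _)
      refine Commute.smul_right ?_ _
      show TgenN R n r (q : R) Q 0 * _ = _ * TgenN R n r (q : R) Q 0
      by_cases h1 : 1 < n
      · have h0 : 0 < n := by omega
        have := RingQuot.mkAlgHom_rel R
          (AKRel.braid01 (R := R) (n := n) (r := r) (q := (q : R)) (Q := Q) h0 h1)
        have hb : Tgen R n r (q : R) Q ⟨0, h0⟩ * Tgen R n r (q : R) Q ⟨1, h1⟩ *
            Tgen R n r (q : R) Q ⟨0, h0⟩ * Tgen R n r (q : R) Q ⟨1, h1⟩ =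
            Tgen R n r (q : R) Q ⟨1, h1⟩ * Tgen R n r (q : R) Q ⟨0, h0⟩ *
            Tgen R n r (q : R) Q ⟨1, h1⟩ * Tgen R n r (q : R) Q ⟨0, h0⟩ := by
          simpa only [Tgen, map_mul] using this
        show TgenN R n r (q : R) Q 0 *
            (TgenN R n r (q : R) Q 1 * Lelt R n r q Q 0 * TgenN R n r (q : R) Q 1) =
            TgenN R n r (q : R) Q 1 * Lelt R n r q Q 0 * TgenN R n r (q : R) Q 1 *
            TgenN R n r (q : R) Q 0
        show TgenN R n r (q : R) Q 0 *
            (TgenN R n r (q : R) Q 1 * TgenN R n r (q : R) Q 0 * TgenN R n r (q : R) Q 1) =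
            TgenN R n r (q : R) Q 1 * TgenN R n r (q : R) Q 0 * TgenN R n r (q : R) Q 1 *
            TgenN R n r (q : R) Q 0
        simp only [TgenN, dif_pos h0, dif_pos h1]
        simp only [← mul_assoc]
        exact hb
      · have : TgenN R n r (q : R) Q 1 = 0 := by simp [TgenN, show ¬ (1 < n) by omega]
        simp [this]
  | succ j ih =>
      set A := TgenN R n r (q : R) Q (j + 2) with hA
      set B := TgenN R n r (q : R) Q (j + 1) with hB
      set X := Lelt R n r q Q j with hX
      set c : R := ((q⁻¹ : Rˣ) : R) with hc
      have hXA : X * A = A * X := (TgenN_comm_Lelt j (j + 2) (by omega)).symm.eq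
      have hbr : B * A * B = A * B * A := TgenN_braid (j + 1) (by omega)
      have hIH : B * X * B * X = X * B * X * B := by
        have h1 : X * (c • (B * X * B)) = (c • (B * X * B)) * X := ih.eq
        have h2 : c • (X * (B * X * B)) = c • ((B * X * B) * X) := by
          rw [mul_smul_comm] at h1
          rw [smul_mul_assoc] at h1
          exact h1
        have h3 := congrArg (fun v => (q : R) • v) h2
        simp only [smul_smul, hc, Units.mul_inv, one_smul] at h3
        simp only [← mul_assoc] at h3
        exact h3.symm
      have hcore := akCore A B X hXA hbr hIH
      have hM : (B * X * B) * (A * (B * X * B) * A) = (A * (B * X * B) * A) * (B * X * B) := by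
        simp only [mul_assoc] at hcore ⊢
        exact hcore.symm
      show Commute (c • (B * X * B)) (c • (A * (c • (B * X * B)) * A))
      have hE : A * (c • (B * X * B)) * A = c • (A * (B * X * B) * A) := by
        rw [mul_smul_comm, smul_mul_assoc]
      rw [hE]
      have hM' : Commute (B * X * B) (A * (B * X * B) * A) := hM
      exact ((hM'.smul_right c).smul_right c).smul_left c

end Aux

/-- the elements `L_1, …, L_n` of the Ariki-Koike algebra pairwise
commute. -/
theorem Lelt_comm (R : Type) [CommRing R] (n r : ℕ) (q : Rˣ) (Q : Fin r → R)
    (j k : ℕ) (hj : j < n) (hk : k < n) :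
    Lelt R n r q Q j * Lelt R n r q Q k = Lelt R n r q Q k * Lelt R n r q Q j := by
  have aux : ∀ (a d : ℕ), Commute (Lelt R n r q Q a) (Lelt R n r q Q (a + d)) := by
    intro a d
    induction d with
    | zero => exact Commute.refl _
    | succ d ih =>
        cases d with
        | zero => exact Lelt_adj a
        | succ e =>
            show Commute (Lelt R n r q Q a) (((q⁻¹ : Rˣ) : R) • _)
            refine Commute.smul_right ?_ _
            refine Commute.mul_right (Commute.mul_right ?_ ?_) ?_
            · exact (TgenN_comm_Lelt a (a + e + 2) (by omega)).symm
            · exact ih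
            · exact (TgenN_comm_Lelt a (a + e + 2) (by omega)).symm
  rcases le_total j k with h | h
  · obtain ⟨d, rfl⟩ := Nat.exists_eq_add_of_le h
    exact (aux j d).eq
  · obtain ⟨d, rfl⟩ := Nat.exists_eq_add_of_le h
    exact (aux k d).symm.eq
end

section
/- In the Ariki-Koike algebra, every symmetric polynomial in L_1, …, L_n is central; in particular L_1 + L_2 + ⋯ + L_n commutes with every generator T_i for 0 ≤ i < n. -/
noncomputable section

/-- Evaluation of a (multivariate) polynomial at the family `L` of elements of a
(possibly noncommutative) algebra, monomials being read left-to-right. -/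
def evalAtL (R : Type) [CommRing R] {A : Type} [Ring A] [Algebra R A]
    (n : ℕ) (L : Fin n → A) (p : MvPolynomial (Fin n) R) : A :=
  (AddMonoidAlgebra.coeff p).sum fun m c => c • ((List.finRange n).map fun k => L k ^ m k).prod

/-!
The `L_k` commute pairwise, `T_0` commutes with every `L_k`, and for `i ≥ 1` the generator `T_i`
commutes with `L_k` for `k ∉ {i - 1, i}`. It also commutes with `L_{i-1} + L_i` and
`L_{i-1} L_i`: both follow from `T_i L_{i-1} T_i = q L_i`, the sum using the quadratic relation.
In the commutative subalgebra generated by the `L_k`, a polynomial invariant under swapping two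
variables `x, y` lies in the subalgebra generated by `x + y`, `x y` and the other variables: pair
each monomial with its swap and write `x^c y^(c+e) + x^(c+e) y^c = (x y)^c (x^e + y^e)`, where
the power sums obey Newton's recursion. Hence a symmetric polynomial in the `L_k` commutes with
every generator, so it is central.
-/

open MvPolynomial

section Commutative

variable {R B : Type*} [CommRing R] [CommRing B] [Algebra R B]

theorem pow_add_pow_mem {S : Subalgebra R B} {x y : B} (hs : x + y ∈ S) (hp : x * y ∈ S) :
    ∀ k : ℕ, x ^ k + y ^ k ∈ S
  | 0 => by simpa only [pow_zero] using add_mem S.one_mem S.one_mem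
  | 1 => by simpa only [pow_one] using hs
  | k + 2 => by
    have newton : x ^ (k + 2) + y ^ (k + 2) =
        (x + y) * (x ^ (k + 1) + y ^ (k + 1)) - x * y * (x ^ k + y ^ k) := by ring
    rw [newton]
    exact sub_mem (mul_mem hs (pow_add_pow_mem hs hp (k + 1)))
      (mul_mem hp (pow_add_pow_mem hs hp k))

theorem pow_mul_pow_add_pow_mul_pow_mem {S : Subalgebra R B} {x y : B} (hs : x + y ∈ S)
    (hp : x * y ∈ S) (c d : ℕ) : x ^ c * y ^ d + x ^ d * y ^ c ∈ S := by
  wlog hcd : c ≤ d generalizing c d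
  · simpa only [add_comm] using this d c (le_of_not_ge hcd)
  obtain ⟨e, rfl⟩ := Nat.exists_eq_add_of_le hcd
  have factor : x ^ c * y ^ (c + e) + x ^ (c + e) * y ^ c = (x * y) ^ c * (x ^ e + y ^ e) := by
    ring
  rw [factor]
  exact mul_mem (pow_mem hp c) (pow_add_pow_mem hs hp e)

variable {σ : Type*} [Fintype σ] [DecidableEq σ]

theorem prod_pow_eq_mul_prod_compl (ℓ : σ → B) {a b : σ} (hab : a ≠ b) (m : σ → ℕ) :
    ∏ k, ℓ k ^ m k = ℓ a ^ m a * ℓ b ^ m b * ∏ k ∈ {a, b}ᶜ, ℓ k ^ m k := by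
  rw [← Finset.prod_mul_prod_compl {a, b}, Finset.prod_pair hab]

variable {S : Subalgebra R B} {ℓ : σ → B} {a b : σ}

theorem prod_compl_pow_mem (hrest : ∀ k, k ≠ a → k ≠ b → ℓ k ∈ S) (m : σ → ℕ) :
    ∏ k ∈ {a, b}ᶜ, ℓ k ^ m k ∈ S :=
  prod_mem fun k hk => pow_mem (hrest k (by simp_all) (by simp_all)) _

theorem prod_pow_add_prod_pow_swap_mem (hab : a ≠ b) (hs : ℓ a + ℓ b ∈ S) (hp : ℓ a * ℓ b ∈ S)
    (hrest : ∀ k, k ≠ a → k ≠ b → ℓ k ∈ S) (m : σ → ℕ) :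
    ∏ k, ℓ k ^ m k + ∏ k, ℓ k ^ m (Equiv.swap a b k) ∈ S := by
  have rest_swap : ∏ k ∈ {a, b}ᶜ, ℓ k ^ m (Equiv.swap a b k) = ∏ k ∈ {a, b}ᶜ, ℓ k ^ m k :=
    Finset.prod_congr rfl fun k hk => by
      rw [Equiv.swap_apply_of_ne_of_ne (by simp_all) (by simp_all)]
  rw [prod_pow_eq_mul_prod_compl ℓ hab fun k => m (Equiv.swap a b k), rest_swap,
    Equiv.swap_apply_left, Equiv.swap_apply_right, prod_pow_eq_mul_prod_compl ℓ hab m, ← add_mul]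
  exact mul_mem (pow_mul_pow_add_pow_mul_pow_mem hs hp _ _) (prod_compl_pow_mem hrest m)

theorem prod_pow_mem_of_apply_eq (hab : a ≠ b) (hp : ℓ a * ℓ b ∈ S)
    (hrest : ∀ k, k ≠ a → k ≠ b → ℓ k ∈ S) {m : σ → ℕ} (hm : m a = m b) :
    ∏ k, ℓ k ^ m k ∈ S := by
  rw [prod_pow_eq_mul_prod_compl ℓ hab, hm, ← mul_pow]
  exact mul_mem (pow_mem hp _) (prod_compl_pow_mem hrest m)

theorem aeval_mem_of_rename_swap_eq (hab : a ≠ b) (hs : ℓ a + ℓ b ∈ S) (hp : ℓ a * ℓ b ∈ S)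
    (hrest : ∀ k, k ≠ a → k ≠ b → ℓ k ∈ S) (f : MvPolynomial σ R)
    (hf : rename (Equiv.swap a b) f = f) : aeval ℓ f ∈ S := by
  set τ := Equiv.swap a b
  have swap_apply : ∀ (m : σ →₀ ℕ) k, m.mapDomain τ k = m (τ k) := fun m k => by
    rw [Finsupp.mapDomain_equiv_apply, Equiv.symm_swap]
  have coeff_swap : ∀ m, coeff (m.mapDomain τ) f = coeff m f := fun m => by
    conv_lhs => rw [← hf]
    exact coeff_rename_mapDomain _ τ.injective f m
  -- Pair each monomial with its swap, working in `B ⧸ S` so that `Finset.sum_involution` applies.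
  have mkQ_eq_zero : ∀ x ∈ S, (Subalgebra.toSubmodule S).mkQ x = 0 := fun x hx =>
    (Submodule.Quotient.mk_eq_zero _).2 hx
  rw [← Subalgebra.mem_toSubmodule, ← Submodule.Quotient.mk_eq_zero,
    ← Submodule.mkQ_apply, aeval_def, eval₂_eq', map_sum]
  simp only [← Algebra.smul_def, map_smul]
  refine Finset.sum_involution (fun m _ => m.mapDomain τ) (fun m _ => ?_) (fun m _ h => ?_)
    (fun m hm => ?_) (fun m _ => ?_)
  · rw [coeff_swap, ← smul_add, ← map_add, funext (swap_apply m),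
      mkQ_eq_zero _ (prod_pow_add_prod_pow_swap_mem hab hs hp hrest m), smul_zero]
  · refine fun hm => h ?_
    have hma : m a = m b := by rw [← hm, swap_apply, Equiv.swap_apply_left, hm]
    rw [mkQ_eq_zero _ (prod_pow_mem_of_apply_eq hab hp hrest hma), smul_zero]
  · rwa [mem_support_iff, coeff_swap, ← mem_support_iff]
  · ext k
    rw [swap_apply, swap_apply, Equiv.swap_apply_self]

end Commutative

theorem evalAtL_algHom_comp {R A B : Type} [CommRing R] [Ring A] [Algebra R A] [CommRing B]
    [Algebra R B] {n : ℕ} (φ : B →ₐ[R] A) (ℓ : Fin n → B) (f : MvPolynomial (Fin n) R) :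
    evalAtL R n (fun k => φ (ℓ k)) f = φ (aeval ℓ f) := by
  rw [aeval_def, eval₂_eq', map_sum]
  simp only [← Algebra.smul_def, map_smul, Fin.prod_univ_def, map_list_prod, List.map_map,
    Function.comp_def, map_pow]
  rfl

section QuadraticRelation

theorem commute_braid_conj {M : Type*} [Monoid M] {a b c : M} (hab : a * b * a = b * a * b)
    (hbc : Commute b c) : Commute a (b * a * c * a * b) :=
  calc a * (b * a * c * a * b) = a * b * a * c * a * b := by simp only [mul_assoc]
    _ = b * a * (b * c) * a * b := by rw [hab]; simp only [mul_assoc]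
    _ = b * a * c * (a * b * a) := by rw [hbc.eq, hab]; simp only [mul_assoc]
    _ = b * a * c * a * b * a := by simp only [mul_assoc]

variable {R A : Type*} [CommRing R] [Ring A] [Algebra R A] {q : Rˣ} {t C D : A}

theorem commute_mul_of_mul_mul_eq_smul (hCD : Commute C D) (hD : t * C * t = (q : R) • D) :
    Commute t (C * D) := by
  rw [Commute, SemiconjBy, ← smul_left_cancel_iff q, Units.smul_def, Units.smul_def]
  calc (q : R) • (t * (C * D)) = t * C * (t * C * t) := by
        rw [hD, mul_smul_comm, mul_assoc]
    _ = (t * C * t) * C * t := by simp only [mul_assoc]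
    _ = (q : R) • (C * D * t) := by
        rw [hD, smul_mul_assoc, smul_mul_assoc, hCD.eq, mul_assoc]

theorem commute_add_of_mul_mul_eq_smul (ht : t * t = ((q : R) - 1) • t + (q : R) • 1)
    (hD : t * C * t = (q : R) • D) : Commute t (C + D) := by
  have hq : ∀ x y : A, (q : R) • x = (q : R) • y → x = y := fun x y h => by
    rwa [← Units.smul_def, ← Units.smul_def, smul_left_cancel_iff] at h
  have left : t * D = ((q : R) - 1) • D + C * t := hq _ _ <|
    calc (q : R) • (t * D) = t * t * (C * t) := by rw [← mul_smul_comm, ← hD]; simp only [mul_assoc]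
      _ = ((q : R) - 1) • (t * C * t) + (q : R) • (C * t) := by
        rw [ht, add_mul, smul_mul_assoc, smul_mul_assoc, one_mul, mul_assoc]
      _ = (q : R) • (((q : R) - 1) • D + C * t) := by rw [hD, smul_comm, smul_add]
  have right : D * t = ((q : R) - 1) • D + t * C := hq _ _ <|
    calc (q : R) • (D * t) = t * C * (t * t) := by
          rw [← smul_mul_assoc, ← hD]; simp only [mul_assoc]
      _ = ((q : R) - 1) • (t * C * t) + (q : R) • (t * C) := by
        rw [ht, mul_add, mul_smul_comm, mul_smul_comm, mul_one]
      _ = (q : R) • (((q : R) - 1) • D + t * C) := by rw [hD, smul_comm, smul_add]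
  rw [Commute, SemiconjBy, mul_add, add_mul, left, right]
  abel

end QuadraticRelation

namespace ArikiKoike

variable {R : Type} [CommRing R] {n r : ℕ}

section Relations

variable {q : R} {Q : Fin r → R}

theorem tgen_eq_tgenN {i : ℕ} (hi : i < n) : Tgen R n r q Q ⟨i, hi⟩ = TgenN R n r q Q i := by
  rw [TgenN, dif_pos hi]

theorem mkAlgHom_ι (i : ℕ) (hi : i < n) :
    RingQuot.mkAlgHom R (AKRel R n r q Q) (FreeAlgebra.ι R ⟨i, hi⟩) = TgenN R n r q Q i :=
  tgen_eq_tgenN hi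

theorem tgenN_of_le {i : ℕ} (hi : n ≤ i) : TgenN R n r q Q i = 0 := dif_neg (not_lt.2 hi)

theorem tgenN_mul_self {i : ℕ} (h1 : 1 ≤ i) (hi : i < n) :
    TgenN R n r q Q i * TgenN R n r q Q i = (q - 1) • TgenN R n r q Q i + q • 1 := by
  have h := RingQuot.mkAlgHom_rel R (AKRel.quad (r := r) (q := q) (Q := Q) ⟨i, hi⟩ h1)
  simp only [map_mul, map_sub, map_add, map_one, map_zero, AlgHom.commutes, mkAlgHom_ι] at h
  rw [Algebra.smul_def, Algebra.smul_def, map_sub, map_one, mul_one, ← sub_eq_zero, ← h]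
  simp only [sub_mul, mul_add, mul_one, one_mul]
  abel

theorem commute_tgenN_tgenN {i j : ℕ} (hij : i + 1 < j) :
    Commute (TgenN R n r q Q i) (TgenN R n r q Q j) := by
  rcases lt_or_ge j n with hj | hj
  · have h := RingQuot.mkAlgHom_rel R
      (AKRel.comm (r := r) (q := q) (Q := Q) ⟨i, by omega⟩ ⟨j, hj⟩ hij)
    simp only [map_mul, mkAlgHom_ι] at h
    exact h
  · rw [tgenN_of_le hj]
    exact Commute.zero_right _

theorem tgenN_braid {i : ℕ} (h1 : 1 ≤ i) :
    TgenN R n r q Q i * TgenN R n r q Q (i + 1) * TgenN R n r q Q i =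
      TgenN R n r q Q (i + 1) * TgenN R n r q Q i * TgenN R n r q Q (i + 1) := by
  rcases lt_or_ge (i + 1) n with hi | hi
  · have h := RingQuot.mkAlgHom_rel R
      (AKRel.braid (r := r) (q := q) (Q := Q) ⟨i, by omega⟩ ⟨i + 1, hi⟩ h1 rfl)
    simpa only [map_mul, mkAlgHom_ι] using h
  · simp only [tgenN_of_le hi, mul_zero, zero_mul]

theorem tgenN_braid_zero_one :
    TgenN R n r q Q 0 * TgenN R n r q Q 1 * TgenN R n r q Q 0 * TgenN R n r q Q 1 =
      TgenN R n r q Q 1 * TgenN R n r q Q 0 * TgenN R n r q Q 1 * TgenN R n r q Q 0 := by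
  rcases lt_or_ge 1 n with h1 | h1
  · have h := RingQuot.mkAlgHom_rel R
      (AKRel.braid01 (r := r) (q := q) (Q := Q) (by omega) h1)
    simpa only [map_mul, mkAlgHom_ι] using h
  · simp only [tgenN_of_le h1, mul_zero, zero_mul]

theorem commute_of_forall_commute_tgen {z : ArikiKoike R n r q Q}
    (h : ∀ i, Commute z (Tgen R n r q Q i)) (y : ArikiKoike R n r q Q) : Commute z y := by
  obtain ⟨x, rfl⟩ := RingQuot.mkAlgHom_surjective R (AKRel R n r q Q) y
  induction x using FreeAlgebra.induction with
  | grade0 a => simpa only [AlgHom.commutes] using Algebra.commute_algebraMap_right a z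
  | grade1 i => exact h i
  | mul x y hx hy => simpa only [map_mul] using hx.mul_right hy
  | add x y hx hy => simpa only [map_add] using hx.add_right hy

end Relations

section Lelt

variable {q : Rˣ} {Q : Fin r → R}

local notation "𝒯" => TgenN R n r (q : R) Q
local notation "ℒ" => Lelt R n r q Q

theorem lelt_succ (j : ℕ) : ℒ (j + 1) = ((q⁻¹ : Rˣ) : R) • (𝒯 (j + 1) * ℒ j * 𝒯 (j + 1)) := rfl

theorem tgenN_mul_lelt_mul_tgenN (j : ℕ) : 𝒯 (j + 1) * ℒ j * 𝒯 (j + 1) = (q : R) • ℒ (j + 1) := by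
  rw [lelt_succ, smul_smul, Units.mul_inv, one_smul]

theorem commute_lelt_of_forall_le {x : ArikiKoike R n r q Q} :
    ∀ a : ℕ, (∀ j ≤ a, Commute x (𝒯 j)) → Commute x (ℒ a)
  | 0, h => h 0 le_rfl
  | a + 1, h => by
    rw [lelt_succ]
    have ht := h (a + 1) le_rfl
    exact ((ht.mul_right (commute_lelt_of_forall_le a fun j hj => h j (by omega))).mul_right
      ht).smul_right _

theorem commute_tgenN_zero_lelt : ∀ j : ℕ, Commute (𝒯 0) (ℒ j)
  | 0 => Commute.refl _
  | 1 => by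
    refine (show Commute (𝒯 0) (𝒯 1 * 𝒯 0 * 𝒯 1) from ?_).smul_right _
    simp only [Commute, SemiconjBy, ← mul_assoc]
    exact tgenN_braid_zero_one
  | j + 2 => by
    rw [lelt_succ]
    have ht : Commute (𝒯 0) (𝒯 (j + 2)) := commute_tgenN_tgenN (by omega)
    exact ((ht.mul_right (commute_tgenN_zero_lelt (j + 1))).mul_right ht).smul_right _

theorem commute_tgenN_lelt_of_succ_lt {i j : ℕ} (h : j + 1 < i) : Commute (𝒯 i) (ℒ j) :=
  commute_lelt_of_forall_le j fun _ hk => (commute_tgenN_tgenN (by omega)).symm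

theorem commute_tgenN_lelt_of_lt {i j : ℕ} (h1 : 1 ≤ i) (h : i < j) : Commute (𝒯 i) (ℒ j) := by
  induction j, h using Nat.le_induction with
  | base =>
    obtain ⟨k, rfl⟩ := Nat.exists_eq_add_of_le' h1
    rw [lelt_succ, lelt_succ, mul_smul_comm, smul_mul_assoc]
    refine (Commute.smul_right ?_ _).smul_right _
    simpa only [mul_assoc] using commute_braid_conj (a := 𝒯 (k + 1)) (tgenN_braid h1)
      (commute_tgenN_lelt_of_succ_lt (i := k + 2) (j := k) (by omega))
  | succ j hij ih =>
    rw [lelt_succ]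
    have ht : Commute (𝒯 i) (𝒯 (j + 1)) := commute_tgenN_tgenN (by omega)
    exact ((ht.mul_right ih).mul_right ht).smul_right _

theorem commute_tgenN_lelt {i j : ℕ} (h1 : 1 ≤ i) (hij : i ≠ j) (hij' : i ≠ j + 1) :
    Commute (𝒯 i) (ℒ j) := by
  rcases lt_or_gt_of_ne hij with h | h
  · exact commute_tgenN_lelt_of_lt h1 h
  · exact commute_tgenN_lelt_of_succ_lt (by omega)

theorem commute_lelt_lelt (a b : ℕ) : Commute (ℒ a) (ℒ b) := by
  wlog hab : a < b generalizing a b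
  · rcases (not_lt.1 hab).eq_or_lt with h | h
    · rw [h]
    · exact (this b a h).symm
  refine (commute_lelt_of_forall_le a fun k hk => ?_).symm
  rcases k with _ | k
  · exact (commute_tgenN_zero_lelt b).symm
  · exact (commute_tgenN_lelt_of_lt (by omega) (by omega)).symm

theorem commute_tgenN_succ_lelt_mul_lelt_succ (j : ℕ) : Commute (𝒯 (j + 1)) (ℒ j * ℒ (j + 1)) :=
  commute_mul_of_mul_mul_eq_smul (q := q) (commute_lelt_lelt _ _) (tgenN_mul_lelt_mul_tgenN j)

theorem commute_tgenN_succ_lelt_add_lelt_succ {j : ℕ} (hj : j + 1 < n) :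
    Commute (𝒯 (j + 1)) (ℒ j + ℒ (j + 1)) :=
  commute_add_of_mul_mul_eq_smul (q := q) (tgenN_mul_self (by omega) hj)
    (tgenN_mul_lelt_mul_tgenN j)

end Lelt

section LeltSubalgebra

variable (R n r) (q : Rˣ) (Q : Fin r → R)

def leltSubalgebra : Subalgebra R (ArikiKoike R n r q Q) :=
  Algebra.adjoin R (Set.range fun k : Fin n => Lelt R n r q Q k)

instance : IsMulCommutative (leltSubalgebra R n r q Q) :=
  Algebra.isMulCommutative_adjoin R <| by
    rintro _ ⟨a, rfl⟩ _ ⟨b, rfl⟩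
    exact commute_lelt_lelt a b

open scoped IsMulCommutative

def leltGen (k : Fin n) : leltSubalgebra R n r q Q :=
  ⟨Lelt R n r q Q k, Algebra.subset_adjoin ⟨k, rfl⟩⟩

variable {R n r q Q}

theorem evalAtL_lelt (f : MvPolynomial (Fin n) R) :
    evalAtL R n (fun k : Fin n => Lelt R n r q Q k) f = aeval (leltGen R n r q Q) f := by
  exact evalAtL_algHom_comp (leltSubalgebra R n r q Q).val (leltGen R n r q Q) f

theorem commute_tgen_aeval_leltGen {f : MvPolynomial (Fin n) R} (hf : f.IsSymmetric) (i : Fin n) :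
    Commute (Tgen R n r q Q i) (aeval (leltGen R n r q Q) f) := by
  let S := (Subalgebra.centralizer R {Tgen R n r q Q i}).comap (leltSubalgebra R n r q Q).val
  have mem_S {x} : x ∈ S ↔ Commute (Tgen R n r q Q i) x := by
    simp only [S, Subalgebra.mem_comap, Subalgebra.mem_centralizer_iff, Set.mem_singleton_iff,
      forall_eq, Subalgebra.coe_val]
    exact Iff.rfl
  refine mem_S.1 ?_
  obtain ⟨_ | j, hi⟩ := i
  · have hf_mem : aeval (leltGen R n r q Q) f ∈ (aeval (leltGen R n r q Q)).range := ⟨f, rfl⟩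
    rw [aeval_range] at hf_mem
    refine Algebra.adjoin_le (Set.range_subset_iff.2 fun k => mem_S.2 ?_) hf_mem
    rw [tgen_eq_tgenN hi]
    exact commute_tgenN_zero_lelt k
  · have hT : Tgen R n r q Q ⟨j + 1, hi⟩ = TgenN R n r q Q (j + 1) := tgen_eq_tgenN hi
    have hab : (⟨j, by omega⟩ : Fin n) ≠ ⟨j + 1, hi⟩ := by simp [Fin.ext_iff]
    have hs : leltGen R n r q Q ⟨j, by omega⟩ + leltGen R n r q Q ⟨j + 1, hi⟩ ∈ S := by
      rw [mem_S, hT]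
      exact commute_tgenN_succ_lelt_add_lelt_succ hi
    have hp : leltGen R n r q Q ⟨j, by omega⟩ * leltGen R n r q Q ⟨j + 1, hi⟩ ∈ S := by
      rw [mem_S, hT]
      exact commute_tgenN_succ_lelt_mul_lelt_succ j
    have hrest : ∀ k, k ≠ ⟨j, by omega⟩ → k ≠ ⟨j + 1, hi⟩ → leltGen R n r q Q k ∈ S := by
      intro k hkj hkj'
      rw [mem_S, hT]
      have hkj : (k : ℕ) ≠ j := Fin.val_ne_of_ne hkj
      have hkj' : (k : ℕ) ≠ j + 1 := Fin.val_ne_of_ne hkj'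
      exact commute_tgenN_lelt (by omega) (by omega) (by omega)
    exact aeval_mem_of_rename_swap_eq (R := R) (B := leltSubalgebra R n r q Q) hab hs hp hrest f
      (hf _)

end LeltSubalgebra

end ArikiKoike

/-- every symmetric polynomial in `L_1, …, L_n` is central in the
Ariki-Koike algebra; in particular `L_1 + ⋯ + L_n` commutes with every generator
`T_i`. -/
theorem symm_poly_Lelt_central (R : Type) [CommRing R] (n r : ℕ) (q : Rˣ) (Q : Fin r → R) :
    (∀ p : MvPolynomial (Fin n) R, p.IsSymmetric →
      ∀ y : ArikiKoike R n r (q : R) Q,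
        evalAtL R n (fun k : Fin n => Lelt R n r q Q (k : ℕ)) p * y =
          y * evalAtL R n (fun k : Fin n => Lelt R n r q Q (k : ℕ)) p) ∧
    (∀ i : Fin n,
      (∑ k : Fin n, Lelt R n r q Q (k : ℕ)) * Tgen R n r (q : R) Q i =
        Tgen R n r (q : R) Q i * ∑ k : Fin n, Lelt R n r q Q (k : ℕ)) := by
  have central : ∀ f : MvPolynomial (Fin n) R, f.IsSymmetric → ∀ y,
      Commute (evalAtL R n (fun k : Fin n => Lelt R n r q Q k) f) y := fun f hf =>
    ArikiKoike.commute_of_forall_commute_tgen fun i => by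
      rw [ArikiKoike.evalAtL_lelt]
      exact (ArikiKoike.commute_tgen_aeval_leltGen hf i).symm
  refine ⟨fun f hf y => central f hf y, fun i => ?_⟩
  have h := central (psum (Fin n) R 1) (psum_isSymmetric _ _ 1) (Tgen R n r q Q i)
  simp only [ArikiKoike.evalAtL_lelt, psum, pow_one, map_sum, aeval_X,
    AddSubmonoidClass.coe_finsetSum] at h
  exact h

end
end

section
/- For any r-multipartition λ of n and any multicomposition μ of n, there is exactly one semistandard λ-tableau of type λ (namely T^λ = λ(t^λ)), and if there exists a semistandard λ-tableau of type μ then λ dominates the multipartition obtained by sorting μ. -/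
structure MultiPartition (r n : ℕ) where
  part : Fin r → (ℕ →₀ ℕ)
  antitone : ∀ s i, part s (i + 1) ≤ part s i
  size_eq : (∑ s : Fin r, (part s).sum fun _ k => k) = n

def MultiPartition.diagram {r n : ℕ} (l : MultiPartition r n) : Set (Fin r × ℕ × ℕ) :=
  {p | p.2.2 < l.part p.1 p.2.1}

structure Tableau {r n : ℕ} (l : MultiPartition r n) where
  entry : l.diagram ≃ Fin n

def Tableau.IsStandard {r n : ℕ} {l : MultiPartition r n} (t : Tableau l) : Prop :=
  (∀ x y : l.diagram, x.1.1 = y.1.1 → x.1.2.1 = y.1.2.1 → x.1.2.2 < y.1.2.2 →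
      t.entry x < t.entry y) ∧
  (∀ x y : l.diagram, x.1.1 = y.1.1 → x.1.2.2 = y.1.2.2 → x.1.2.1 < y.1.2.1 →
      t.entry x < t.entry y)

abbrev StdTableau {r n : ℕ} (l : MultiPartition r n) := {t : Tableau l // t.IsStandard}

def Tableau.permute {r n : ℕ} {l : MultiPartition r n} (t : Tableau l)
    (w : Equiv.Perm (Fin n)) : Tableau l :=
  ⟨t.entry.trans w⟩

/-- The order `⪯` on entry pairs `(s, i)` (component `s`, row `i`):
`(s,i) ⪯ (t,j)` iff `s < t`, or `s = t` and `i ≤ j`. -/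
def pLE {r : ℕ} (x y : Fin r × ℕ) : Prop := x.1 < y.1 ∨ (x.1 = y.1 ∧ x.2 ≤ y.2)

/-- The strict version of the order `⪯`. -/
def pLT {r : ℕ} (x y : Fin r × ℕ) : Prop := x.1 < y.1 ∨ (x.1 = y.1 ∧ x.2 < y.2)

/-- A semistandard `λ`-tableau of type `μ`: a filling of the diagram of `λ` by
pairs `(s, i)`, where each pair `(s, i)` occurs `μ^{(s)}_i` times, the entries
weakly increase along rows, strictly increase down columns, and a node in
component `c` has an entry `(s, i)` with `s ≥ c`. -/
def IsSemistandard {r n : ℕ} (l : MultiPartition r n) (mu : Fin r → (ℕ →₀ ℕ))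
    (T : l.diagram → Fin r × ℕ) : Prop :=
  (∀ (s : Fin r) (i : ℕ), {x : l.diagram | T x = (s, i)}.ncard = mu s i) ∧
  (∀ x y : l.diagram, x.1.1 = y.1.1 → x.1.2.1 = y.1.2.1 → x.1.2.2 < y.1.2.2 →
      pLE (T x) (T y)) ∧
  (∀ x y : l.diagram, x.1.1 = y.1.1 → x.1.2.2 = y.1.2.2 → x.1.2.1 < y.1.2.1 →
      pLT (T x) (T y)) ∧
  (∀ x : l.diagram, x.1.1 ≤ (T x).1)

/-- The size of a composition. -/
def psize (c : ℕ →₀ ℕ) : ℕ := c.sum fun _ k => k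

/-- The `i`-th largest part (0-based) of a composition: the `i`-th entry of the
partition obtained by sorting the parts into decreasing order. -/
noncomputable def nthLargest (c : ℕ →₀ ℕ) (i : ℕ) : ℕ :=
  sSup {m | i < (c.support.filter fun j => m ≤ c j).card}

variable {r n : ℕ}

lemma MultiPartition.anti (l : MultiPartition r n) (s : Fin r) : Antitone (l.part s) :=
  antitone_nat_of_succ_le (l.antitone s)

lemma diagram_finite (l : MultiPartition r n) : l.diagram.Finite := by
  classical
  set S : Finset ℕ := Finset.univ.biUnion (fun s : Fin r => (l.part s).support) with hS
  set M : ℕ := S.sup (fun i => Finset.univ.sup (fun s : Fin r => l.part s i)) with hM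
  apply Set.Finite.subset (Finset.univ ×ˢ S ×ˢ Finset.range M : Finset (Fin r × ℕ × ℕ)).finite_toSet
  rintro ⟨s, i, j⟩ h
  have h' : j < l.part s i := h
  have hiS : i ∈ S := Finset.mem_biUnion.mpr ⟨s, Finset.mem_univ s,
    Finsupp.mem_support_iff.mpr (by omega)⟩
  have h1 : l.part s i ≤ Finset.univ.sup (fun s : Fin r => l.part s i) :=
    Finset.le_sup (f := fun s : Fin r => l.part s i) (Finset.mem_univ s)
  have h2 : Finset.univ.sup (fun s : Fin r => l.part s i) ≤ M := Finset.le_sup (f := fun i => Finset.univ.sup (fun s : Fin r => l.part s i)) hiS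
  simp only [Finset.coe_product, Set.mem_prod, Finset.mem_coe, Finset.mem_univ,
    Finset.mem_range, true_and]
  exact ⟨hiS, by omega⟩

lemma ncard_node (l : MultiPartition r n) (t : Fin r) (j : ℕ) :
    {x : l.diagram | x.1.1 = t ∧ x.1.2.1 = j}.ncard = l.part t j := by
  rw [← Nat.card_coe_set_eq]
  refine Nat.card_eq_of_equiv_fin ?_
  refine ⟨fun x => ⟨x.1.1.2.2, ?_⟩, fun c => ⟨⟨(t, j, c), c.2⟩, rfl, rfl⟩, ?_, ?_⟩
  · obtain ⟨⟨⟨s, i, c⟩, hd⟩, h1, h2⟩ := x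
    simp only at h1 h2
    subst h1; subst h2
    exact hd
  · rintro ⟨⟨⟨s, i, c⟩, hd⟩, h1, h2⟩
    simp only at h1 h2
    subst h1; subst h2
    rfl
  · rintro ⟨c, hc⟩
    rfl

lemma entry_ge (l : MultiPartition r n) (mu : Fin r → (ℕ →₀ ℕ)) (T : l.diagram → Fin r × ℕ)
    (hT : IsSemistandard l mu T) (x : l.diagram) : pLE (x.1.1, x.1.2.1) (T x) := by
  obtain ⟨⟨s, i, c⟩, hx⟩ := x
  induction i with
  | zero =>
    have := hT.2.2.2 ⟨(s, 0, c), hx⟩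
    rcases lt_or_eq_of_le this with h | h
    · exact Or.inl h
    · exact Or.inr ⟨h, Nat.zero_le _⟩
  | succ i ih =>
    have hx' : (s, i, c) ∈ l.diagram := lt_of_lt_of_le hx (l.antitone s i)
    have hcol := hT.2.2.1 ⟨(s, i, c), hx'⟩ ⟨(s, i + 1, c), hx⟩ rfl rfl (Nat.lt_succ_self i)
    have hle := ih hx'
    rcases hle with h | ⟨h1, h2⟩
    · rcases hcol with h' | ⟨h1', _⟩
      · exact Or.inl (h.trans h')
      · exact Or.inl (h1' ▸ h)
    · rcases hcol with h' | ⟨h1', h2'⟩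
      · exact Or.inl (h1 ▸ h')
      · exact Or.inr ⟨h1.trans h1', Nat.succ_le_of_lt (lt_of_le_of_lt h2 h2')⟩

instance {r : ℕ} : DecidableRel (pLE (r := r)) := fun x y => by unfold pLE; infer_instance
instance {r : ℕ} : DecidableRel (pLT (r := r)) := fun x y => by unfold pLT; infer_instance

lemma pLE_trans {r : ℕ} {a b c : Fin r × ℕ} (h1 : pLE a b) (h2 : pLE b c) : pLE a c := by
  rcases h1 with h | ⟨h, h'⟩ <;> rcases h2 with g | ⟨g, g'⟩
  · exact Or.inl (h.trans g)
  · exact Or.inl (g ▸ h)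
  · exact Or.inl (h ▸ g)
  · exact Or.inr ⟨h.trans g, h'.trans g'⟩

lemma pLE_antisymm {r : ℕ} {a b : Fin r × ℕ} (h1 : pLE a b) (h2 : pLE b a) : a = b := by
  rcases h1 with h | ⟨h, h'⟩ <;> rcases h2 with g | ⟨g, g'⟩
  · exact absurd (h.trans g) (lt_irrefl _)
  · exact absurd h (g ▸ lt_irrefl _)
  · exact absurd g (h ▸ lt_irrefl _)
  · exact Prod.ext h (le_antisymm h' g')

lemma fiber_count' {α β : Type*} [Finite α] [DecidableEq β] (f : α → β) (Q : Finset β) :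
    {x | f x ∈ Q}.ncard = ∑ q ∈ Q, {x | f x = q}.ncard := by
  classical
  induction Q using Finset.induction_on with
  | empty => simp
  | @insert a Q ha ih =>
    rw [Finset.sum_insert ha, ← ih]
    have he : {x | f x ∈ insert a Q} = {x | f x = a} ∪ {x | f x ∈ Q} := by
      ext x; simp
    rw [he, Set.ncard_union_eq ?_ (Set.toFinite _) (Set.toFinite _)]
    rw [Set.disjoint_left]
    intro x hx hx2
    exact ha (hx ▸ hx2)

lemma count_T (l : MultiPartition r n) (mu : Fin r → (ℕ →₀ ℕ)) (T : l.diagram → Fin r × ℕ)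
    (hT : IsSemistandard l mu T) (P : Fin r × ℕ → Prop) [DecidablePred P] :
    {x : l.diagram | P (T x)}.ncard =
      ∑ q ∈ (Finset.univ ×ˢ Finset.univ.biUnion fun t : Fin r => (mu t).support).filter P,
        mu q.1 q.2 := by
  classical
  haveI : Finite l.diagram := (diagram_finite l).to_subtype
  have he : {x : l.diagram | P (T x)} =
      {x | T x ∈ (Finset.univ ×ˢ Finset.univ.biUnion fun t : Fin r => (mu t).support).filter P} := by
    ext x
    simp only [Set.mem_setOf_eq, Finset.mem_filter, Finset.mem_product, Finset.mem_univ,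
      true_and]
    constructor
    · intro h
      refine ⟨Finset.mem_biUnion.mpr ⟨(T x).1, Finset.mem_univ _, Finsupp.mem_support_iff.mpr ?_⟩, h⟩
      have hpos : 0 < {y : l.diagram | T y = ((T x).1, (T x).2)}.ncard :=
        (Set.ncard_pos (Set.toFinite _)).mpr ⟨x, rfl⟩
      rw [hT.1 (T x).1 (T x).2] at hpos
      omega
    · exact fun h => h.2
  rw [he, fiber_count' T _]
  exact Finset.sum_congr rfl fun q _ => hT.1 q.1 q.2

lemma count_node (l : MultiPartition r n) (P : Fin r × ℕ → Prop) [DecidablePred P] :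
    {x : l.diagram | P (x.1.1, x.1.2.1)}.ncard =
      ∑ q ∈ (Finset.univ ×ˢ Finset.univ.biUnion fun t : Fin r => (l.part t).support).filter P,
        l.part q.1 q.2 := by
  classical
  haveI : Finite l.diagram := (diagram_finite l).to_subtype
  have he : {x : l.diagram | P (x.1.1, x.1.2.1)} =
      {x : l.diagram | (x.1.1, x.1.2.1) ∈
        (Finset.univ ×ˢ Finset.univ.biUnion fun t : Fin r => (l.part t).support).filter P} := by
    ext x
    simp only [Set.mem_setOf_eq, Finset.mem_filter, Finset.mem_product, Finset.mem_univ,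
      true_and]
    constructor
    · intro h
      refine ⟨Finset.mem_biUnion.mpr ⟨x.1.1, Finset.mem_univ _, Finsupp.mem_support_iff.mpr ?_⟩, h⟩
      have := x.2
      have hx : x.1.2.2 < l.part x.1.1 x.1.2.1 := this
      omega
    · exact fun h => h.2
  rw [he, fiber_count' (fun x : l.diagram => (x.1.1, x.1.2.1)) _]
  refine Finset.sum_congr rfl fun q _ => ?_
  rw [← ncard_node l q.1 q.2]
  congr 1
  ext x
  simp [Prod.ext_iff]

lemma part1 (l : MultiPartition r n) :
    ∃! T : l.diagram → Fin r × ℕ, IsSemistandard l l.part T := by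
  classical
  haveI : Finite l.diagram := (diagram_finite l).to_subtype
  refine ⟨fun x => (x.1.1, x.1.2.1), ⟨?_, ?_, ?_, ?_⟩, ?_⟩
  · intro s i
    rw [← ncard_node l s i]; congr 1; ext x; simp [Prod.ext_iff]
  · intro x y h1 h2 _; exact Or.inr ⟨h1, le_of_eq h2⟩
  · intro x y h1 _ h3; exact Or.inr ⟨h1, h3⟩
  · intro x; exact le_refl _
  · intro T hT
    funext x
    have hsub : {y : l.diagram | pLE (T y) (x.1.1, x.1.2.1)} ⊆
        {y : l.diagram | pLE (y.1.1, y.1.2.1) (x.1.1, x.1.2.1)} :=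
      fun y hy => pLE_trans (entry_ge l l.part T hT y) hy
    have hcard : {y : l.diagram | pLE (y.1.1, y.1.2.1) (x.1.1, x.1.2.1)}.ncard ≤
        {y : l.diagram | pLE (T y) (x.1.1, x.1.2.1)}.ncard := by
      rw [count_T l l.part T hT (fun q => pLE q (x.1.1, x.1.2.1)),
        count_node l (fun q => pLE q (x.1.1, x.1.2.1))]
    have heq := Set.eq_of_subset_of_ncard_le hsub hcard (Set.toFinite _)
    have hx : x ∈ {y : l.diagram | pLE (y.1.1, y.1.2.1) (x.1.1, x.1.2.1)} :=
      Or.inr ⟨rfl, le_refl _⟩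
    rw [← heq] at hx
    exact pLE_antisymm hx (entry_ge l l.part T hT x)

lemma inj_bound (l : MultiPartition r n) (mu : Fin r → (ℕ →₀ ℕ)) (T : l.diagram → Fin r × ℕ)
    (hT : IsSemistandard l mu T) (s : Fin r) (i : ℕ) (K : Finset ℕ) (hKcard : K.card ≤ i) :
    {x : l.diagram | ((T x).1 = s ∧ (T x).2 ∈ K) ∧ x.1.1 = s}.ncard ≤
      {x : l.diagram | x.1.1 = s ∧ x.1.2.1 < i}.ncard := by
  classical
  haveI : Finite l.diagram := (diagram_finite l).to_subtype
  set Y' : Set l.diagram := {x | ((T x).1 = s ∧ (T x).2 ∈ K) ∧ x.1.1 = s} with hY'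
  set S : l.diagram → Set l.diagram :=
    fun x => {y | y ∈ Y' ∧ y.1.2.2 = x.1.2.2 ∧ y.1.2.1 < x.1.2.1} with hS
  set rank : l.diagram → ℕ := fun x => (S x).ncard with hrank
  -- column strict monotonicity of the second entry among Y'
  have hmono : ∀ x y : l.diagram, x ∈ Y' → y ∈ Y' → x.1.2.2 = y.1.2.2 →
      x.1.2.1 < y.1.2.1 → (T x).2 < (T y).2 := by
    intro x y hx hy hcol hrow
    have h := hT.2.2.1 x y (hx.2.trans hy.2.symm) hcol hrow
    rcases h with h | h
    · rw [hx.1.1, hy.1.1] at h; exact absurd h (lt_irrefl _)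
    · exact h.2
  -- elements of S x ∪ {x} are determined by their row
  have hdet : ∀ x ∈ Y', ∀ y ∈ Y', x.1.2.2 = y.1.2.2 → x.1.2.1 = y.1.2.1 → x = y := by
    intro x hx y hy hcol hrow
    exact Subtype.ext (Prod.ext (hx.2.trans hy.2.symm) (Prod.ext hrow hcol))
  have hxS : ∀ x : l.diagram, x ∉ S x := by
    intro x hx
    exact absurd hx.2.2 (lt_irrefl _)
  have hSsub : ∀ x ∈ Y', S x ⊆ Y' := fun x _ y hy => hy.1
  -- (a) rank x < i for x ∈ Y'
  have hrank_lt : ∀ x ∈ Y', rank x < i := by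
    intro x hx
    have hinj : Set.InjOn (fun y => (T y).2) (insert x (S x)) := by
      intro y hy z hz hyz
      have hyY : y ∈ Y' := by rcases hy with rfl | hy; exact hx; exact hy.1
      have hzY : z ∈ Y' := by rcases hz with rfl | hz; exact hx; exact hz.1
      have hycol : y.1.2.2 = x.1.2.2 := by
        rcases hy with rfl | hy; rfl; exact hy.2.1
      have hzcol : z.1.2.2 = x.1.2.2 := by
        rcases hz with rfl | hz; rfl; exact hz.2.1
      rcases lt_trichotomy y.1.2.1 z.1.2.1 with h | h | h
      · exact absurd hyz (ne_of_lt (hmono y z hyY hzY (hycol.trans hzcol.symm) h))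
      · exact hdet y hyY z hzY (hycol.trans hzcol.symm) h
      · exact absurd hyz.symm (ne_of_lt (hmono z y hzY hyY (hzcol.trans hycol.symm) h))
    have himg : (fun y : l.diagram => (T y).2) '' insert x (S x) ⊆ ↑K := by
      rintro m ⟨y, hy, rfl⟩
      have hyY : y ∈ Y' := by rcases hy with rfl | hy; exact hx; exact hy.1
      exact hyY.1.2
    have h1 : (insert x (S x)).ncard = rank x + 1 :=
      Set.ncard_insert_of_notMem (hxS x) (Set.toFinite _)
    have h2 : (insert x (S x)).ncard ≤ K.card := by
      rw [← Set.ncard_image_of_injOn hinj, ← Set.ncard_coe_finset K]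
      exact Set.ncard_le_ncard himg (Set.toFinite _)
    omega
  -- (b) rank x ≤ row of x
  have hrank_le : ∀ x ∈ Y', rank x ≤ x.1.2.1 := by
    intro x hx
    have hinj : Set.InjOn (fun y : l.diagram => y.1.2.1) (S x) := by
      intro y hy z hz hyz
      exact hdet y hy.1 z hz.1 (hy.2.1.trans hz.2.1.symm) hyz
    have himg : (fun y : l.diagram => y.1.2.1) '' S x ⊆ Set.Iio x.1.2.1 := by
      rintro m ⟨y, hy, rfl⟩
      exact hy.2.2
    have hIio : (Set.Iio x.1.2.1).ncard = x.1.2.1 := by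
      have : Set.Iio x.1.2.1 = ↑(Finset.range x.1.2.1) := by ext; simp
      rw [this, Set.ncard_coe_finset, Finset.card_range]
    calc rank x = ((fun y : l.diagram => y.1.2.1) '' S x).ncard :=
          (Set.ncard_image_of_injOn hinj).symm
      _ ≤ (Set.Iio x.1.2.1).ncard := Set.ncard_le_ncard himg (Set.toFinite _)
      _ = x.1.2.1 := hIio
  -- (c) target membership
  have hmem : ∀ x ∈ Y', (s, rank x, x.1.2.2) ∈ l.diagram := by
    intro x hx
    have hx2 : x.1.2.2 < l.part x.1.1 x.1.2.1 := x.2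
    have : l.part s x.1.2.1 ≤ l.part s (rank x) := l.anti s (hrank_le x hx)
    rw [hx.2] at hx2
    exact lt_of_lt_of_le hx2 this
  set φ : l.diagram → l.diagram :=
    fun x => if h : (s, rank x, x.1.2.2) ∈ l.diagram then ⟨_, h⟩ else x with hφdef
  have hφ : ∀ (x : l.diagram) (hx : x ∈ Y'), φ x = ⟨(s, rank x, x.1.2.2), hmem x hx⟩ := by
    intro x hx
    simp only [hφdef, dif_pos (hmem x hx)]
  -- rank is strictly monotone in the row along a column within Y'
  have hrank_mono : ∀ x ∈ Y', ∀ y ∈ Y', x.1.2.2 = y.1.2.2 → x.1.2.1 < y.1.2.1 →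
      rank x < rank y := by
    intro x hx y hy hcol hrow
    have hsub : insert x (S x) ⊆ S y := by
      rintro z (rfl | hz)
      · exact ⟨hx, hcol, hrow⟩
      · exact ⟨hz.1, hz.2.1.trans hcol, hz.2.2.trans hrow⟩
    calc rank x < rank x + 1 := Nat.lt_succ_self _
      _ = (insert x (S x)).ncard := (Set.ncard_insert_of_notMem (hxS x) (Set.toFinite _)).symm
      _ ≤ rank y := Set.ncard_le_ncard hsub (Set.toFinite _)
  have hinjφ : Set.InjOn φ Y' := by
    intro x hx y hy hxy
    rw [hφ x hx, hφ y hy] at hxy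
    have hv : (s, rank x, x.1.2.2) = (s, rank y, y.1.2.2) := congrArg Subtype.val hxy
    simp only [Prod.mk.injEq, true_and] at hv
    have h1 : rank x = rank y := hv.1
    have h2 : x.1.2.2 = y.1.2.2 := hv.2
    rcases lt_trichotomy x.1.2.1 y.1.2.1 with h | h | h
    · exact absurd h1 (ne_of_lt (hrank_mono x hx y hy h2 h))
    · exact hdet x hx y hy h2 h
    · exact absurd h1.symm (ne_of_lt (hrank_mono y hy x hx h2.symm h))
  have himgφ : φ '' Y' ⊆ {x : l.diagram | x.1.1 = s ∧ x.1.2.1 < i} := by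
    rintro z ⟨x, hx, rfl⟩
    rw [hφ x hx]
    exact ⟨rfl, hrank_lt x hx⟩
  calc Y'.ncard = (φ '' Y').ncard := (Set.ncard_image_of_injOn hinjφ).symm
    _ ≤ _ := Set.ncard_le_ncard himgφ (Set.toFinite _)

lemma psize_superset (c : ℕ →₀ ℕ) (S : Finset ℕ) (h : c.support ⊆ S) :
    psize c = ∑ j ∈ S, c j := by
  rw [psize, Finsupp.sum]
  exact Finset.sum_subset h fun j _ hj => Finsupp.notMem_support_iff.mp hj

lemma sum_prod_filter_lt (f : Fin r → ℕ →₀ ℕ) (s : Fin r) :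
    ∑ q ∈ (Finset.univ ×ˢ Finset.univ.biUnion fun t : Fin r => (f t).support).filter
        (fun q => q.1 < s), f q.1 q.2 = ∑ t ∈ Finset.univ.filter (· < s), psize (f t) := by
  rw [Finset.sum_filter, Finset.sum_product, Finset.sum_filter]
  refine Finset.sum_congr rfl fun t _ => ?_
  by_cases h : t < s
  · simp only [if_pos h]
    exact (psize_superset (f t) _ fun j hj =>
      Finset.mem_biUnion.mpr ⟨t, Finset.mem_univ _, hj⟩).symm
  · simp [h]

lemma sum_prod_filter_eq (f : Fin r → ℕ →₀ ℕ) (s : Fin r) (K : Finset ℕ)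
    (hK : K ⊆ (f s).support) :
    ∑ q ∈ (Finset.univ ×ˢ Finset.univ.biUnion fun t : Fin r => (f t).support).filter
        (fun q => q.1 = s ∧ q.2 ∈ K), f q.1 q.2 = ∑ k ∈ K, f s k := by
  classical
  have hKsub : K ⊆ Finset.univ.biUnion fun t : Fin r => (f t).support := fun k hk =>
    Finset.mem_biUnion.mpr ⟨s, Finset.mem_univ _, hK hk⟩
  rw [Finset.sum_filter, Finset.sum_product]
  rw [Finset.sum_eq_single_of_mem s (Finset.mem_univ s) (fun t _ ht =>
    Finset.sum_eq_zero fun j _ => by simp [ht])]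
  simp only [true_and]
  rw [← Finset.sum_filter, Finset.filter_mem_eq_inter, Finset.inter_eq_right.mpr hKsub]

lemma sum_prod_filter_row (f : Fin r → ℕ →₀ ℕ) (s : Fin r) (i : ℕ) :
    ∑ q ∈ (Finset.univ ×ˢ Finset.univ.biUnion fun t : Fin r => (f t).support).filter
        (fun q => q.1 = s ∧ q.2 < i), f q.1 q.2 = ∑ j ∈ Finset.range i, f s j := by
  classical
  rw [Finset.sum_filter, Finset.sum_product]
  rw [Finset.sum_eq_single_of_mem s (Finset.mem_univ s) (fun t _ ht =>
    Finset.sum_eq_zero fun j _ => by simp [ht])]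
  simp only [true_and]
  rw [← Finset.sum_filter]
  refine Finset.sum_subset (fun j hj => Finset.mem_range.mpr (Finset.mem_filter.mp hj).2) ?_
  intro j hj hj'
  by_contra hne
  have hjsup : j ∈ (f s).support := Finsupp.mem_support_iff.mpr hne
  exact hj' (Finset.mem_filter.mpr ⟨Finset.mem_biUnion.mpr ⟨s, Finset.mem_univ _, hjsup⟩,
    Finset.mem_range.mp hj⟩)

lemma nth_bdd (c : ℕ →₀ ℕ) (i : ℕ) :
    BddAbove {m | i < (c.support.filter fun j => m ≤ c j).card} := by
  refine ⟨c.support.sup c, fun m hm => ?_⟩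
  have h : 0 < (c.support.filter fun j => m ≤ c j).card := lt_of_le_of_lt (Nat.zero_le i) hm
  obtain ⟨j, hj⟩ := Finset.card_pos.mp h
  rw [Finset.mem_filter] at hj
  exact hj.2.trans (Finset.le_sup hj.1)

lemma nth_succ_le (c : ℕ →₀ ℕ) (i : ℕ) : nthLargest c (i+1) ≤ nthLargest c i := by
  rcases Set.eq_empty_or_nonempty {m | i+1 < (c.support.filter fun j => m ≤ c j).card} with h | h
  · simp [nthLargest, h]
  · have hmem := Nat.sSup_mem h (nth_bdd c (i+1))
    exact le_csSup (nth_bdd c i) (lt_of_le_of_lt (Nat.le_succ i) hmem)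

lemma exists_K (c : ℕ →₀ ℕ) (i : ℕ) :
    ∃ K : Finset ℕ, K ⊆ c.support ∧ K.card ≤ i ∧ (∀ k ∈ K, nthLargest c i ≤ c k) ∧
      ∑ j ∈ Finset.range i, nthLargest c j ≤ ∑ k ∈ K, c k := by
  induction i with
  | zero => exact ⟨∅, by simp, by simp, by simp, by simp⟩
  | succ i ih =>
    obtain ⟨K, hK, hcard, hge, hsum⟩ := ih
    by_cases hm : nthLargest c i = 0
    · refine ⟨K, hK, hcard.trans (Nat.le_succ i), ?_, ?_⟩
      · intro k hk
        exact le_trans (nth_succ_le c i) (by rw [hm]; exact Nat.zero_le _)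
      · rw [Finset.sum_range_succ, hm]; simpa using hsum
    · have hne : {m | i < (c.support.filter fun j => m ≤ c j).card}.Nonempty := by
        by_contra h
        rw [Set.not_nonempty_iff_eq_empty] at h
        exact hm (by simp [nthLargest, h])
      have hmem := Nat.sSup_mem hne (nth_bdd c i)
      have hlt : K.card < (c.support.filter fun j => nthLargest c i ≤ c j).card :=
        lt_of_le_of_lt hcard hmem
      have hsub : K ⊆ c.support.filter fun j => nthLargest c i ≤ c j := fun k hk =>
        Finset.mem_filter.mpr ⟨hK hk, hge k hk⟩
      have hns : ¬ (c.support.filter fun j => nthLargest c i ≤ c j) ⊆ K := fun h =>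
        absurd (Finset.card_le_card h) (by omega)
      obtain ⟨k₀, hk₀, hk₀K⟩ := Finset.not_subset.mp hns
      rw [Finset.mem_filter] at hk₀
      refine ⟨insert k₀ K, ?_, ?_, ?_, ?_⟩
      · exact Finset.insert_subset hk₀.1 hK
      · rw [Finset.card_insert_of_notMem hk₀K]; omega
      · intro k hk
        rcases Finset.mem_insert.mp hk with rfl | hk
        · exact (nth_succ_le c i).trans hk₀.2
        · exact (nth_succ_le c i).trans (hge k hk)
      · rw [Finset.sum_insert hk₀K, Finset.sum_range_succ]
        have := hk₀.2
        omega

lemma part2 (l : MultiPartition r n) (mu : Fin r → (ℕ →₀ ℕ)) (T : l.diagram → Fin r × ℕ)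
    (hT : IsSemistandard l mu T) (s : Fin r) (i : ℕ) :
    (∑ t ∈ Finset.univ.filter (· < s), psize (mu t)) +
        ∑ j ∈ Finset.range i, nthLargest (mu s) j ≤
      (∑ t ∈ Finset.univ.filter (· < s), psize (l.part t)) +
        ∑ j ∈ Finset.range i, l.part s j := by
  classical
  haveI : Finite l.diagram := (diagram_finite l).to_subtype
  obtain ⟨K, hKsub, hKcard, -, hKsum⟩ := exists_K (mu s) i
  set X : Set l.diagram := {x | (T x).1 < s} with hXdef
  set Y : Set l.diagram := {x | (T x).1 = s ∧ (T x).2 ∈ K} with hYdef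
  set C : Set l.diagram := {x | x.1.1 < s} with hCdef
  set Y' : Set l.diagram := {x | ((T x).1 = s ∧ (T x).2 ∈ K) ∧ x.1.1 = s} with hY'def
  set F : Set l.diagram := {x | x.1.1 = s ∧ x.1.2.1 < i} with hFdef
  have hX : X.ncard = ∑ t ∈ Finset.univ.filter (· < s), psize (mu t) := by
    have h := count_T l mu T hT (fun q => q.1 < s)
    rw [sum_prod_filter_lt mu s] at h
    exact h
  have hY : Y.ncard = ∑ k ∈ K, mu s k := by
    have h := count_T l mu T hT (fun q => q.1 = s ∧ q.2 ∈ K)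
    rw [sum_prod_filter_eq mu s K hKsub] at h
    exact h
  have hC : C.ncard = ∑ t ∈ Finset.univ.filter (· < s), psize (l.part t) := by
    have h := count_node l (fun q => q.1 < s)
    rw [sum_prod_filter_lt l.part s] at h
    exact h
  have hF : F.ncard = ∑ j ∈ Finset.range i, l.part s j := by
    have h := count_node l (fun q => q.1 = s ∧ q.2 < i)
    rw [sum_prod_filter_row l.part s i] at h
    exact h
  have hdisj : Disjoint X Y := by
    rw [Set.disjoint_left]
    intro x hx hy
    have hx' : (T x).1 < s := hx
    rw [hy.1] at hx'
    exact absurd hx' (lt_irrefl _)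
  have hsub : X ∪ Y ⊆ C ∪ Y' := by
    rintro x (hx | hx)
    · exact Or.inl (lt_of_le_of_lt (hT.2.2.2 x) hx)
    · have := hT.2.2.2 x
      rw [hx.1] at this
      rcases lt_or_eq_of_le this with h | h
      · exact Or.inl h
      · exact Or.inr ⟨hx, h⟩
  calc (∑ t ∈ Finset.univ.filter (· < s), psize (mu t)) +
        ∑ j ∈ Finset.range i, nthLargest (mu s) j
      ≤ (∑ t ∈ Finset.univ.filter (· < s), psize (mu t)) + ∑ k ∈ K, mu s k :=
        Nat.add_le_add_left hKsum _
    _ = X.ncard + Y.ncard := by rw [hX, hY]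
    _ = (X ∪ Y).ncard := (Set.ncard_union_eq hdisj (Set.toFinite _) (Set.toFinite _)).symm
    _ ≤ (C ∪ Y').ncard := Set.ncard_le_ncard hsub (Set.toFinite _)
    _ ≤ C.ncard + Y'.ncard := Set.ncard_union_le _ _
    _ ≤ C.ncard + F.ncard := Nat.add_le_add_left (inj_bound l mu T hT s i K hKcard) _
    _ = _ := by rw [hC, hF]


/-- there is exactly one semistandard `λ`-tableau of type `λ`;
and if a semistandard `λ`-tableau of type `μ` exists then `λ` dominates the
multipartition obtained by sorting (each component of) `μ`. -/
theorem semistandard_type_self_unique_and_dom (r n : ℕ) (l : MultiPartition r n)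
    (mu : Fin r → (ℕ →₀ ℕ)) :
    (∃! T : l.diagram → Fin r × ℕ, IsSemistandard l l.part T) ∧
    ((∃ T : l.diagram → Fin r × ℕ, IsSemistandard l mu T) →
      ∀ (s : Fin r) (i : ℕ),
        (∑ t ∈ Finset.univ.filter (· < s), psize (mu t)) +
            ∑ j ∈ Finset.range i, nthLargest (mu s) j ≤
          (∑ t ∈ Finset.univ.filter (· < s), psize (l.part t)) +
            ∑ j ∈ Finset.range i, l.part s j) := by
  refine ⟨part1 l, ?_⟩
  rintro ⟨T, hT⟩ s i
  exact part2 l mu T hT s i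
end
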